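/- arXiv:1010.3210 — 2 statements merged into one kernel-verified Lean document; each statement's English description precedes it below -/
import Mathlib

section
/- Every smoothly closed geometric real algebra is smoothly affine: if A is a commutative real algebra such that for every a₁,…,aₙ ∈ A and every smooth function f ∈ C^∞(ℝⁿ) there exists a unique a ∈ A with f ∘ (ev_{a₁} × ⋯ × ev_{aₙ}) = ev_a as functions on Hom_{ℝ-alg}(A, ℝ), then for every n the natural evaluation map Hom_{ℝ-alg}(C^∞(ℝⁿ), A) → Aⁿ sending φ to (φ(x₁),…,φ(xₙ)) is bijective. -/
/-- The `ℝ`-algebra of smooth (`C^∞`) real-valued functions on `ℝⁿ`, as a subalgebra of all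
functions `(Fin n → ℝ) → ℝ`. -/
def smoothFns (n : ℕ) : Subalgebra ℝ ((Fin n → ℝ) → ℝ) where
  carrier := {f | ContDiff ℝ (⊤ : ℕ∞) f}
  mul_mem' := fun {a b} (hf : ContDiff ℝ (⊤ : ℕ∞) a) (hg : ContDiff ℝ (⊤ : ℕ∞) b) => hf.mul hg
  add_mem' := fun {a b} (hf : ContDiff ℝ (⊤ : ℕ∞) a) (hg : ContDiff ℝ (⊤ : ℕ∞) b) => hf.add hg
  algebraMap_mem' := fun r => (contDiff_const : ContDiff ℝ (⊤ : ℕ∞) fun _ : Fin n → ℝ => r)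

/-- The `i`-th coordinate function `x_i ∈ C^∞(ℝⁿ)`. -/
def coordFn {n : ℕ} (i : Fin n) : smoothFns n :=
  ⟨fun p => p i, ((ContinuousLinearMap.proj i : (Fin n → ℝ) →L[ℝ] ℝ).contDiff : ContDiff ℝ (⊤ : ℕ∞) fun p : Fin n → ℝ => p i)⟩

/-- For a commutative `ℝ`-algebra `A` and `a : A`, the evaluation function
`ev_a : Spec_ℝ(A) = Hom_{ℝ-alg}(A, ℝ) → ℝ`. -/
def evA {A : Type} [CommRing A] [Algebra ℝ A] (a : A) : (A →ₐ[ℝ] ℝ) → ℝ :=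
  fun x => x a

/-- `A` is smoothly closed geometric: for every `a₁, …, aₙ ∈ A` and every smooth
`f ∈ C^∞(ℝⁿ)` there is a unique `a ∈ A` with `f ∘ (ev_{a₁} × ⋯ × ev_{aₙ}) = ev_a`
as functions on `Spec_ℝ(A)`. -/
def SmoothlyClosedGeometric (A : Type) [CommRing A] [Algebra ℝ A] : Prop :=
  ∀ (n : ℕ) (a : Fin n → A) (f : smoothFns n),
    ∃! b : A, (fun x : A →ₐ[ℝ] ℝ => (f : (Fin n → ℝ) → ℝ) (fun i => evA (a i) x)) = evA b

lemma milnor {n : ℕ} (χ : smoothFns n →ₐ[ℝ] ℝ) (f : smoothFns n) :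
    χ f = (f : (Fin n → ℝ) → ℝ) (fun i => χ (coordFn i)) := by
  by_contra hne
  set p : Fin n → ℝ := fun i => χ (coordFn i) with hp
  set c : ℝ := χ f with hc
  set g : smoothFns n := f - algebraMap ℝ _ c with hg
  set h : smoothFns n :=
    g * g + ∑ i, (coordFn i - algebraMap ℝ _ (p i)) * (coordFn i - algebraMap ℝ _ (p i)) with hh
  have hval : ∀ x : Fin n → ℝ, (h : (Fin n → ℝ) → ℝ) x
      = ((f : (Fin n → ℝ) → ℝ) x - c) ^ 2 + ∑ i, (x i - p i) ^ 2 := by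
    intro x
    simp [hh, hg, coordFn, sq, Finset.sum_apply]
  have hpos : ∀ x : Fin n → ℝ, 0 < (h : (Fin n → ℝ) → ℝ) x := by
    intro x
    rw [hval]
    rcases eq_or_ne x p with rfl | hx
    · have h0 : (f : (Fin n → ℝ) → ℝ) p - c ≠ 0 := sub_ne_zero.mpr (Ne.symm hne)
      have h1 : (0:ℝ) < ((f : (Fin n → ℝ) → ℝ) p - c) ^ 2 := by positivity
      have h2 : (0:ℝ) ≤ ∑ i, (p i - p i) ^ 2 :=
        Finset.sum_nonneg fun i _ => sq_nonneg _
      linarith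
    · obtain ⟨i, hi⟩ := Function.ne_iff.mp hx
      have h0 : x i - p i ≠ 0 := sub_ne_zero.mpr hi
      have h1 : (0:ℝ) < ∑ j, (x j - p j) ^ 2 :=
        Finset.sum_pos' (fun j _ => sq_nonneg _) ⟨i, Finset.mem_univ i, by positivity⟩
      positivity
  have hχh : χ h = 0 := by
    simp [hh, hg, map_sum, hp, hc]
  have hsm : ContDiff ℝ (⊤ : ℕ∞) ((h : (Fin n → ℝ) → ℝ)) := h.2
  have hinv : (fun x => ((h : (Fin n → ℝ) → ℝ) x)⁻¹) ∈ smoothFns n :=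
    hsm.inv fun x => (hpos x).ne'
  have hone : h * ⟨_, hinv⟩ = 1 := by
    ext x
    exact mul_inv_cancel₀ (hpos x).ne'
  have := congrArg χ hone
  rw [map_mul, hχh, zero_mul, map_one] at this
  exact zero_ne_one this

/-- Every smoothly closed geometric real algebra is smoothly affine: the natural evaluation
map `Hom_{ℝ-alg}(C^∞(ℝⁿ), A) → Aⁿ`, `φ ↦ (φ(x₁), …, φ(xₙ))`, is bijective for every `n`. -/
theorem smoothlyClosedGeometric_smoothlyAffine
    (A : Type) [CommRing A] [Algebra ℝ A] (hA : SmoothlyClosedGeometric A) (n : ℕ) :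
    Function.Bijective (fun (φ : smoothFns n →ₐ[ℝ] A) => fun i : Fin n => φ (coordFn i)) := by
  have key : ∀ (θ : smoothFns n →ₐ[ℝ] A) (f : smoothFns n),
      (fun x : A →ₐ[ℝ] ℝ => (f : (Fin n → ℝ) → ℝ) (fun i => evA (θ (coordFn i)) x))
        = evA (θ f) := by
    intro θ f
    funext x
    simpa [evA] using (milnor (x.comp θ) f).symm
  constructor
  · intro φ ψ hfeq
    apply AlgHom.ext
    intro f
    have h1 := key φ f
    have h2 := key ψ f
    have hfeq' : ∀ i, φ (coordFn i) = ψ (coordFn i) := fun i => congrFun hfeq i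
    simp only [hfeq'] at h1
    exact (hA n (fun i => ψ (coordFn i)) f).unique h1 h2
  · intro a
    set K : smoothFns n → A := fun f => (hA n a f).choose with hK
    have spec : ∀ f : smoothFns n,
        (fun x : A →ₐ[ℝ] ℝ => (f : (Fin n → ℝ) → ℝ) (fun i => evA (a i) x)) = evA (K f) :=
      fun f => (hA n a f).choose_spec.1
    have uniq : ∀ (f : smoothFns n) (b : A),
        ((fun x : A →ₐ[ℝ] ℝ => (f : (Fin n → ℝ) → ℝ) (fun i => evA (a i) x)) = evA b) →
        K f = b :=
      fun f b hb => ((hA n a f).choose_spec.2 b hb).symm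
    refine ⟨{ toFun := K, map_one' := ?_, map_mul' := ?_, map_zero' := ?_, map_add' := ?_,
              commutes' := ?_ }, ?_⟩
    · apply uniq
      funext x
      simp [evA]
    · intro f g
      apply uniq
      funext x
      have hf := congrFun (spec f) x
      have hg := congrFun (spec g) x
      simp only [evA, map_mul] at hf hg ⊢
      rw [MulMemClass.coe_mul]
      simp only [Pi.mul_apply]
      rw [hf, hg]
    · apply uniq
      funext x
      simp [evA]
    · intro f g
      apply uniq
      funext x
      have hf := congrFun (spec f) x
      have hg := congrFun (spec g) x
      simp only [evA, map_add] at hf hg ⊢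
      rw [AddMemClass.coe_add]
      simp only [Pi.add_apply]
      rw [hf, hg]
    · intro r
      apply uniq
      funext x
      simp [evA, Algebra.algebraMap_eq_smul_one]
    · funext i
      show K (coordFn i) = a i
      apply uniq
      funext x
      simp [evA, coordFn]
end

section
/- The jet functor is left adjoint to the forgetful functor from D_M-algebras to O_M-algebras: for every smooth map π : C → M there is a D_M-algebra Jet(O_C) with a natural bijection Hom_{D_M-alg}(Jet(O_C), A) ≅ Hom_{O_M-alg}(O_C, A) for every commutative D_M-algebra A. -/
/-- A differential algebra over `O_M = k[t]` (algebraically, a `D_M`-algebra for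
`D_M = k[t]⟨∂_t⟩`): a commutative `k[t]`-algebra equipped with a derivation extending
`∂_t` on `k[t]`. -/
structure DiffAlg (k : Type) [CommRing k] where
  carrier : Type
  [commRing : CommRing carrier]
  [algk : Algebra k carrier]
  [algkt : Algebra (Polynomial k) carrier]
  [tower : IsScalarTower k (Polynomial k) carrier]
  δ : Derivation k carrier carrier
  compat : ∀ p : Polynomial k,
    δ (algebraMap (Polynomial k) carrier p) =
      algebraMap (Polynomial k) carrier (Polynomial.derivative p)

attribute [instance] DiffAlg.commRing DiffAlg.algk DiffAlg.algkt DiffAlg.tower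

/-!
`Jet(O_C)` is the free differential `k[t]`-algebra `k[t][x_{n,c}]`, with `∂ x_{n,c} = x_{n+1,c}`,
modulo the differential ideal generated by the relations of `O_C` among the `x_{0,c}`, namely
the image of the kernel of `k[t][x_c] → O_C`. A `k[t]`-algebra map `g : O_C → B` extends to the
free algebra by `x_{n,c} ↦ δⁿ (g c)`; this extension intertwines the derivations, so it kills
the whole differential ideal once it kills the relations. It is unique because `t` and the
`x_{n,c} = ∂ⁿ x_{0,c}` generate.
-/

namespace Derivation

variable {R A : Type*} [CommRing R] [CommRing A] [Algebra R A] (D : Derivation R A A)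

def differentialSpan (S : Set A) : Ideal A :=
  sInf {I : Ideal A | S ⊆ I ∧ ∀ x ∈ I, D x ∈ I}

theorem subset_differentialSpan (S : Set A) : S ⊆ D.differentialSpan S := fun _ hx =>
  Submodule.mem_sInf.2 fun _ hI => hI.1 hx

theorem map_mem_differentialSpan {S : Set A} {x : A} (hx : x ∈ D.differentialSpan S) :
    D x ∈ D.differentialSpan S :=
  Submodule.mem_sInf.2 fun I hI => hI.2 x (Submodule.mem_sInf.1 hx I hI)

theorem differentialSpan_le_ker {B : Type*} [CommRing B] [Algebra R B] {δ : Derivation R B B}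
    {f : A →+* B} (hf : Function.Semiconj f D δ) {S : Set A} (hS : S ⊆ RingHom.ker f) :
    D.differentialSpan S ≤ RingHom.ker f :=
  sInf_le ⟨hS, fun x hx => by rw [RingHom.mem_ker] at hx ⊢; rw [hf x, hx, map_zero]⟩

def onQuotient (I : Ideal A) (hI : ∀ x ∈ I, D x ∈ I) : Derivation R (A ⧸ I) (A ⧸ I) :=
  mk' ((I.restrictScalars R).liftQ ((Ideal.Quotient.mkₐ R I).toLinearMap ∘ₗ D.toLinearMap)
      fun x hx => Ideal.Quotient.eq_zero_iff_mem.2 (hI x hx)) fun a b => by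
    obtain ⟨a, rfl⟩ := Ideal.Quotient.mk_surjective a
    obtain ⟨b, rfl⟩ := Ideal.Quotient.mk_surjective b
    change Ideal.Quotient.mk I (D (a * b)) =
      _ • Ideal.Quotient.mk I (D b) + _ • Ideal.Quotient.mk I (D a)
    rw [leibniz, map_add, smul_eq_mul, smul_eq_mul, map_mul, map_mul, smul_eq_mul, smul_eq_mul]

theorem onQuotient_mk (I : Ideal A) (hI : ∀ x ∈ I, D x ∈ I) (a : A) :
    D.onQuotient I hI (Ideal.Quotient.mk I a) = Ideal.Quotient.mk I (D a) := rfl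

end Derivation

theorem MvPolynomial.semiconj_derivation_of_X {σ R B : Type*} [CommRing R] [CommRing B]
    [Algebra R B] {f : MvPolynomial σ R →ₐ[R] B}
    {D : Derivation R (MvPolynomial σ R) (MvPolynomial σ R)} {δ : Derivation R B B}
    (h : ∀ i, f (D (X i)) = δ (f (X i))) : Function.Semiconj f D δ := by
  intro p
  induction p using MvPolynomial.induction_on with
  | C r => rw [← algebraMap_eq, D.map_algebraMap, map_zero, f.commutes, δ.map_algebraMap]
  | add p q hp hq => rw [map_add, map_add, map_add, hp, hq, map_add]
  | mul_X p i hp => simp only [Derivation.leibniz, map_add, map_mul, smul_eq_mul, hp, h]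

open scoped Polynomial in
theorem Polynomial.aeval_algebraMap_X {R A : Type*} [CommSemiring R] [Semiring A] [Algebra R A]
    [Algebra R[X] A] [IsScalarTower R R[X] A] (p : R[X]) :
    aeval (algebraMap R[X] A X) p = algebraMap R[X] A p := by
  rw [← IsScalarTower.coe_toAlgHom' R, aeval_algHom_apply, aeval_X_left_apply]

noncomputable section

namespace Jet

open MvPolynomial
open scoped Polynomial

section Free

variable (k : Type) [CommRing k] (ι : Type*)

/-- The variable `none` is the coordinate `t` of `k[t]`, and `some (n, i)` stands for `∂ⁿ i`. -/
abbrev freeAlgebra : Algebra k[X] (MvPolynomial (Option (ℕ × ι)) k) :=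
  (Polynomial.aeval (X none)).toAlgebra

attribute [local instance] freeAlgebra

theorem free_algebraMap_eq (p : k[X]) :
    algebraMap k[X] (MvPolynomial (Option (ℕ × ι)) k) p = Polynomial.aeval (X none) p := rfl

instance : IsScalarTower k k[X] (MvPolynomial (Option (ℕ × ι)) k) :=
  .of_algebraMap_eq fun r => ((Polynomial.aeval _).commutes r).symm

def freeDer :
    Derivation k (MvPolynomial (Option (ℕ × ι)) k) (MvPolynomial (Option (ℕ × ι)) k) :=
  mkDerivation k fun v => v.elim 1 fun p => X (some (p.1 + 1, p.2))

theorem freeDer_X_none : freeDer k ι (X none) = 1 := mkDerivation_X _ _ _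

theorem freeDer_X_some (n : ℕ) (i : ι) :
    freeDer k ι (X (some (n, i))) = X (some (n + 1, i)) := mkDerivation_X _ _ _

theorem freeDer_iterate_X (n : ℕ) (i : ι) :
    (freeDer k ι)^[n] (X (some (0, i))) = X (some (n, i)) := by
  induction n with
  | zero => rfl
  | succ n ih => rw [Function.iterate_succ_apply', ih, freeDer_X_some]

theorem freeDer_algebraMap (p : k[X]) :
    freeDer k ι (algebraMap k[X] _ p) = algebraMap k[X] _ (Polynomial.derivative p) := by
  rw [free_algebraMap_eq, free_algebraMap_eq, Derivation.map_aeval, freeDer_X_none, smul_eq_mul,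
    mul_one]

def zeroJet : MvPolynomial ι k[X] →ₐ[k[X]] MvPolynomial (Option (ℕ × ι)) k :=
  aeval fun i => X (some (0, i))

variable {k ι} (B : DiffAlg k) (g : ι → B.carrier)

def freeLift : MvPolynomial (Option (ℕ × ι)) k →ₐ[k[X]] B.carrier :=
  { aeval (R := k) fun v =>
      v.elim (algebraMap k[X] B.carrier Polynomial.X) fun p => B.δ^[p.1] (g p.2) with
    commutes' := fun p => by
      change aeval _ (Polynomial.aeval (X none) p) = _
      rw [← Polynomial.aeval_algHom_apply, aeval_X]
      exact Polynomial.aeval_algebraMap_X p }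

theorem freeLift_X_none : freeLift B g (X none) = algebraMap k[X] B.carrier Polynomial.X :=
  aeval_X _ _

theorem freeLift_X_some (n : ℕ) (i : ι) : freeLift B g (X (some (n, i))) = B.δ^[n] (g i) :=
  aeval_X _ _

theorem freeLift_semiconj : Function.Semiconj (freeLift B g) (freeDer k ι) B.δ :=
  MvPolynomial.semiconj_derivation_of_X (f := (freeLift B g).restrictScalars k) fun v => by
    change freeLift B g _ = B.δ (freeLift B g _)
    cases v with
    | none =>
      rw [freeDer_X_none, map_one, freeLift_X_none, B.compat, Polynomial.derivative_X, map_one]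
    | some p =>
      rw [freeDer_X_some, freeLift_X_some, freeLift_X_some, Function.iterate_succ_apply']

theorem freeHom_ext {f₁ f₂ : MvPolynomial (Option (ℕ × ι)) k →ₐ[k[X]] B.carrier}
    (h₁ : Function.Semiconj f₁ (freeDer k ι) B.δ)
    (h₂ : Function.Semiconj f₂ (freeDer k ι) B.δ)
    (h : ∀ i, f₁ (X (some (0, i))) = f₂ (X (some (0, i)))) : f₁ = f₂ := by
  refine AlgHom.restrictScalars_injective k (MvPolynomial.algHom_ext fun v => ?_)
  change f₁ (X v) = f₂ (X v)
  cases v with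
  | none =>
    rw [← Polynomial.aeval_X (R := k) (X none), ← free_algebraMap_eq, f₁.commutes,
      f₂.commutes]
  | some p =>
    rw [← freeDer_iterate_X, h₁.iterate_right p.1, h₂.iterate_right p.1, h]

end Free

section Quotient

variable (k : Type) [CommRing k] (C : Type) [CommRing C] [Algebra k[X] C]

attribute [local instance] freeAlgebra

def ideal : Ideal (MvPolynomial (Option (ℕ × C)) k) :=
  (freeDer k C).differentialSpan (zeroJet k C '' RingHom.ker (ACounit k[X] C))

theorem freeDer_mem_ideal {a : MvPolynomial (Option (ℕ × C)) k} (ha : a ∈ ideal k C) :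
    freeDer k C a ∈ ideal k C :=
  (freeDer k C).map_mem_differentialSpan ha

theorem zeroJet_mem_ideal {q : MvPolynomial C k[X]} (hq : q ∈ RingHom.ker (ACounit k[X] C)) :
    zeroJet k C q ∈ ideal k C :=
  (freeDer k C).subset_differentialSpan _ ⟨q, hq, rfl⟩

def diffAlg : DiffAlg k where
  carrier := MvPolynomial (Option (ℕ × C)) k ⧸ ideal k C
  δ := (freeDer k C).onQuotient _ fun _ => freeDer_mem_ideal k C
  compat p := by
    rw [← Ideal.Quotient.mk_algebraMap, Derivation.onQuotient_mk, freeDer_algebraMap,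
      Ideal.Quotient.mk_algebraMap]

def unit : C →ₐ[k[X]] MvPolynomial (Option (ℕ × C)) k ⧸ ideal k C :=
  (Ideal.Quotient.liftₐ _ ((Ideal.Quotient.mkₐ k[X] (ideal k C)).comp (zeroJet k C))
    fun _ hq => Ideal.Quotient.eq_zero_iff_mem.2 (zeroJet_mem_ideal k C hq)).comp
  (Ideal.quotientKerAlgEquivOfSurjective (ACounit_surjective k[X] C)).symm.toAlgHom

theorem unit_apply (c : C) : unit k C c = Ideal.Quotient.mk (ideal k C) (X (some (0, c))) := by
  have hc : (Ideal.quotientKerAlgEquivOfSurjective (ACounit_surjective k[X] C)).symm c =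
      Ideal.Quotient.mk _ (X c) := by
    rw [AlgEquiv.symm_apply_eq, Ideal.quotientKerAlgEquivOfSurjective_mk, ACounit_X]
  rw [unit, AlgHom.comp_apply, AlgEquiv.coe_toAlgHom, hc]
  exact congrArg (Ideal.Quotient.mk _) (aeval_X _ c)

variable {k C} (B : DiffAlg k) (g : C →ₐ[k[X]] B.carrier)

theorem freeLift_comp_zeroJet : (freeLift B g).comp (zeroJet k C) = g.comp (ACounit k[X] C) :=
  MvPolynomial.algHom_ext fun c => by simp [zeroJet, freeLift_X_some]

theorem ideal_le_ker_freeLift : ideal k C ≤ RingHom.ker (freeLift B g) := by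
  refine (freeDer k C).differentialSpan_le_ker (freeLift_semiconj B g) ?_
  rintro _ ⟨q, hq, rfl⟩
  rw [SetLike.mem_coe, RingHom.mem_ker] at hq
  change freeLift B g (zeroJet k C q) = 0
  rw [← AlgHom.comp_apply, freeLift_comp_zeroJet, AlgHom.comp_apply, hq, map_zero]

def lift : (MvPolynomial (Option (ℕ × C)) k ⧸ ideal k C) →ₐ[k[X]] B.carrier :=
  Ideal.Quotient.liftₐ _ (freeLift B g) fun _ ha => ideal_le_ker_freeLift B g ha

theorem lift_semiconj : Function.Semiconj (lift B g) (diffAlg k C).δ B.δ := by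
  intro x
  obtain ⟨a, rfl⟩ := Ideal.Quotient.mk_surjective x
  exact freeLift_semiconj B g a

theorem lift_comp_unit : (lift B g).comp (unit k C) = g := by
  ext c
  rw [AlgHom.comp_apply, unit_apply]
  exact freeLift_X_some B g 0 c

theorem hom_ext
    {f₁ f₂ : (MvPolynomial (Option (ℕ × C)) k ⧸ ideal k C) →ₐ[k[X]] B.carrier}
    (h₁ : Function.Semiconj f₁ (diffAlg k C).δ B.δ)
    (h₂ : Function.Semiconj f₂ (diffAlg k C).δ B.δ)
    (h : f₁.comp (unit k C) = f₂.comp (unit k C)) : f₁ = f₂ := by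
  refine Ideal.Quotient.algHom_ext _
    (freeHom_ext B (h₁.comp_left fun _ => rfl) (h₂.comp_left fun _ => rfl) fun c => ?_)
  have hc := AlgHom.congr_fun h c
  rwa [AlgHom.comp_apply, AlgHom.comp_apply, unit_apply] at hc

end Quotient

end Jet

end

/-- The jet functor is left adjoint to the forgetful functor from `D_M`-algebras to
`O_M`-algebras (here `O_M = k[t]`, `D_M = k[t]⟨∂_t⟩`): for every commutative `O_M`-algebra
`O_C` there is a `D_M`-algebra `Jet(O_C)` together with an `O_M`-algebra map
`ι : O_C → Jet(O_C)` such that for every `D_M`-algebra `B`, composition with `ι` is a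
bijection `Hom_{D_M-alg}(Jet(O_C), B) ≅ Hom_{O_M-alg}(O_C, B)`. -/
theorem jet_left_adjoint (k : Type) [CommRing k]
    (C : Type) [CommRing C] [Algebra (Polynomial k) C] :
    ∃ (J : DiffAlg k) (ι : C →ₐ[Polynomial k] J.carrier),
      ∀ B : DiffAlg k,
        Function.Bijective
          (fun (φ : {f : J.carrier →ₐ[Polynomial k] B.carrier //
              ∀ a : J.carrier, f (J.δ a) = B.δ (f a)}) =>
            (φ.1.comp ι : C →ₐ[Polynomial k] B.carrier)) :=
  ⟨Jet.diffAlg k C, Jet.unit k C, fun B =>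
    ⟨fun φ ψ h => Subtype.ext (Jet.hom_ext B φ.2 ψ.2 h),
      fun g => ⟨⟨Jet.lift B g, Jet.lift_semiconj B g⟩, Jet.lift_comp_unit B g⟩⟩⟩
end
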